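/- The induced map φ₀ : S → S (the tight horseshoe map) is a homeomorphism of S: it is a continuous bijection of the quotient space S to itself with continuous inverse. -/
import Mathlib


noncomputable section

/-- The unit square `Σ = [0,1] × [0,1] ⊆ ℝ²`. -/
def Sq : Set (ℝ × ℝ) := Set.Icc (0 : ℝ) 1 ×ˢ Set.Icc (0 : ℝ) 1

/-- The (discontinuous, non-injective) horseshoe-like map
`F(x,y) = (2x, y/2)` for `x ≤ 1/2` and `F(x,y) = (2−2x, 1−y/2)` for `x > 1/2`. -/
def F : ℝ × ℝ → ℝ × ℝ :=
  fun p => if p.1 ≤ 1 / 2 then (2 * p.1, p.2 / 2) else (2 - 2 * p.1, 1 - p.2 / 2)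

/-- The set `E` of fold-segment endpoints together with the bottom-left corner:
`E = {(0,0), (1,1)} ∪ {(0, 2^{−i}) : i ≥ 0} ∪ {(2^{−i}, 0) : i ≥ 0}`. -/
def Efold : Set (ℝ × ℝ) :=
  {((0 : ℝ), (0 : ℝ)), ((1 : ℝ), (1 : ℝ))} ∪
    {q | ∃ i : ℕ, q = ((0 : ℝ), (2 : ℝ) ^ (-(i : ℤ)))} ∪
    {q | ∃ i : ℕ, q = ((2 : ℝ) ^ (-(i : ℤ)), (0 : ℝ))}

/-- The generating relation for the identifications on `Σ`:
`(x,1) ∼ (1−x,1)` for `x ∈ [0,1]`; `(1,y) ∼ (1,1−y)` for `y ∈ [0,1]`;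
`(0,y) ∼ (0, 3·2^{−i} − y)` for `i ≥ 1`, `y ∈ [2^{−i}, 2^{−i+1}]`;
`(x,0) ∼ (3·2^{−i} − x, 0)` for `i ≥ 1`, `x ∈ [2^{−i}, 2^{−i+1}]`;
and `p ∼ p′` for all `p, p′ ∈ E`. -/
def baseRel (p p' : ℝ × ℝ) : Prop :=
  (∃ x ∈ Set.Icc (0 : ℝ) 1, p = (x, (1 : ℝ)) ∧ p' = (1 - x, (1 : ℝ))) ∨
  (∃ y ∈ Set.Icc (0 : ℝ) 1, p = ((1 : ℝ), y) ∧ p' = ((1 : ℝ), 1 - y)) ∨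
  (∃ i : ℕ, 1 ≤ i ∧ ∃ y ∈ Set.Icc ((2 : ℝ) ^ (-(i : ℤ))) ((2 : ℝ) ^ (-(i : ℤ) + 1)),
      p = ((0 : ℝ), y) ∧ p' = ((0 : ℝ), 3 * (2 : ℝ) ^ (-(i : ℤ)) - y)) ∨
  (∃ i : ℕ, 1 ≤ i ∧ ∃ x ∈ Set.Icc ((2 : ℝ) ^ (-(i : ℤ))) ((2 : ℝ) ^ (-(i : ℤ) + 1)),
      p = (x, (0 : ℝ)) ∧ p' = (3 * (2 : ℝ) ^ (-(i : ℤ)) - x, (0 : ℝ))) ∨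
  (p ∈ Efold ∧ p' ∈ Efold)

/-- The smallest equivalence relation containing `baseRel` (all points related by
`baseRel` lie in `Σ`, so its restriction to `Σ` is the smallest equivalence relation
on `Σ` containing the given identifications). -/
def hsRel : ℝ × ℝ → ℝ × ℝ → Prop := Relation.EqvGen baseRel

/-- The setoid on `Σ` given by restricting `hsRel`. -/
def hsSetoid : Setoid ↥Sq :=
  ⟨fun p q => hsRel p.val q.val,
   ⟨fun _ => Relation.EqvGen.refl _, fun h => Relation.EqvGen.symm _ _ h, fun h h' => Relation.EqvGen.trans _ _ _ h h'⟩⟩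

/-- The quotient sphere `S = Σ/∼`, with the quotient topology. -/
abbrev HS : Type := Quotient hsSetoid

/-- The quotient map `π : Σ → S`. -/
def hsPi (p : ↥Sq) : HS := Quotient.mk hsSetoid p

end

noncomputable section AuxHorse

/-! ### Auxiliary lemmas -/

lemma pmk {a b c d : ℝ} (h1 : a = c) (h2 : b = d) : ((a,b) : ℝ×ℝ) = (c,d) := by rw [h1, h2]

lemma F_left {x y : ℝ} (h : x ≤ 1/2) : F (x,y) = (2*x, y/2) := if_pos h
lemma F_right {x y : ℝ} (h : ¬ x ≤ 1/2) : F (x,y) = (2-2*x, 1-y/2) := if_neg h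

/-- Candidate inverse of `F`. -/
def Ginv : ℝ × ℝ → ℝ × ℝ :=
  fun p => if p.2 ≤ 1 / 2 then (p.1 / 2, 2 * p.2) else (1 - p.1 / 2, 2 - 2 * p.2)

lemma G_low {x y : ℝ} (h : y ≤ 1/2) : Ginv (x,y) = (x/2, 2*y) := if_pos h
lemma G_high {x y : ℝ} (h : ¬ y ≤ 1/2) : Ginv (x,y) = (1-x/2, 2-2*y) := if_neg h

lemma tp_pos (i : ℕ) : (0:ℝ) < (2:ℝ)^(-(i:ℤ)) := by positivity

lemma tp_le_one (i : ℕ) : (2:ℝ)^(-(i:ℤ)) ≤ 1 := by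
  calc (2:ℝ)^(-(i:ℤ)) ≤ (2:ℝ)^(0:ℤ) := by
        apply zpow_le_zpow_right₀ one_le_two; omega
    _ = 1 := by norm_num

lemma tp_half {i : ℕ} (h : 1 ≤ i) : (2:ℝ)^(-(i:ℤ)) ≤ 1/2 := by
  calc (2:ℝ)^(-(i:ℤ)) ≤ (2:ℝ)^(-1:ℤ) := by
        apply zpow_le_zpow_right₀ one_le_two; omega
    _ = 1/2 := by norm_num

lemma tp_succ (i : ℕ) : (2:ℝ)^(-((i+1:ℕ):ℤ)) = (2:ℝ)^(-(i:ℤ))/2 := by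
  push_cast
  rw [show (-((i:ℤ)+1)) = -(i:ℤ) + (-1) by ring, zpow_add₀ (by norm_num : (2:ℝ) ≠ 0)]
  norm_num; ring

lemma tp_add1 (i : ℕ) : (2:ℝ)^(-(i:ℤ)+1) = 2 * (2:ℝ)^(-(i:ℤ)) := by
  rw [zpow_add₀ (by norm_num : (2:ℝ) ≠ 0)]; ring

/-- Membership helpers for `Efold`. -/
lemma E_00 : ((0:ℝ), (0:ℝ)) ∈ Efold := by
  simp [Efold]

lemma E_11 : ((1:ℝ), (1:ℝ)) ∈ Efold := by
  simp [Efold]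

lemma E_left (i : ℕ) : ((0:ℝ), (2:ℝ)^(-(i:ℤ))) ∈ Efold :=
  Or.inl (Or.inr ⟨i, rfl⟩)

lemma E_bot (i : ℕ) : ((2:ℝ)^(-(i:ℤ)), (0:ℝ)) ∈ Efold :=
  Or.inr ⟨i, rfl⟩

lemma E_01 : ((0:ℝ), (1:ℝ)) ∈ Efold := by
  have := E_left 0; norm_num at this ⊢; exact this

lemma E_10 : ((1:ℝ), (0:ℝ)) ∈ Efold := by
  have := E_bot 0; norm_num at this ⊢; exact this

lemma F_maps_E : ∀ p ∈ Efold, F p ∈ Efold := by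
  intro p hp
  simp only [Efold, Set.mem_union, Set.mem_insert_iff, Set.mem_singleton_iff,
    Set.mem_setOf_eq] at hp
  rcases hp with ((rfl | rfl) | ⟨i, rfl⟩) | ⟨i, rfl⟩
  · rw [F_left (by norm_num)]; norm_num; exact E_00
  · rw [F_right (by norm_num)]
    have : ((2:ℝ) - 2*1, 1 - 1/2) = ((0:ℝ), (2:ℝ)^(-((1:ℕ):ℤ))) := by push_cast; norm_num
    rw [this]; exact E_left 1
  · rw [F_left (by norm_num)]
    have : ((2:ℝ)*0, (2:ℝ)^(-(i:ℤ))/2) = ((0:ℝ), (2:ℝ)^(-((i+1:ℕ):ℤ))) := by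
      rw [tp_succ]; norm_num
    rw [this]; exact E_left (i+1)
  · rcases i with _ | j
    · rw [F_right (by norm_num)]
      have : ((2:ℝ) - 2*(2:ℝ)^(-((0:ℕ):ℤ)), 1 - 0/2) = ((0:ℝ), (1:ℝ)) := by push_cast; norm_num
      rw [this]; exact E_01
    · rw [F_left (le_trans (tp_half (by omega)) (by norm_num))]
      have : ((2:ℝ)*(2:ℝ)^(-((j+1:ℕ):ℤ)), (0:ℝ)/2) = ((2:ℝ)^(-(j:ℤ)), (0:ℝ)) := by
        rw [tp_succ]; exact pmk (by ring) (by ring)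
      rw [this]; exact E_bot j

lemma G_maps_E : ∀ p ∈ Efold, Ginv p ∈ Efold := by
  intro p hp
  simp only [Efold, Set.mem_union, Set.mem_insert_iff, Set.mem_singleton_iff,
    Set.mem_setOf_eq] at hp
  rcases hp with ((rfl | rfl) | ⟨i, rfl⟩) | ⟨i, rfl⟩
  · rw [G_low (by norm_num)]; norm_num; exact E_00
  · rw [G_high (by norm_num)]
    have : ((1:ℝ) - 1/2, 2 - 2*1) = ((2:ℝ)^(-((1:ℕ):ℤ)), (0:ℝ)) := by push_cast; norm_num
    rw [this]; exact E_bot 1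
  · rcases i with _ | j
    · rw [G_high (by norm_num)]
      have : ((1:ℝ) - 0/2, 2 - 2*(2:ℝ)^(-((0:ℕ):ℤ))) = ((1:ℝ), (0:ℝ)) := by push_cast; norm_num
      rw [this]; exact E_10
    · rw [G_low (le_trans (tp_half (by omega)) (by norm_num))]
      have : ((0:ℝ)/2, (2:ℝ)*(2:ℝ)^(-((j+1:ℕ):ℤ))) = ((0:ℝ), (2:ℝ)^(-(j:ℤ))) := by
        rw [tp_succ]; exact pmk (by ring) (by ring)
      rw [this]; exact E_left j
  · rw [G_low (le_trans (by positivity : (0:ℝ) ≤ 0) (by norm_num))]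
    have : ((2:ℝ)^(-(i:ℤ))/2, (2:ℝ)*0) = ((2:ℝ)^(-((i+1:ℕ):ℤ)), (0:ℝ)) := by
      rw [tp_succ]; norm_num
    rw [this]; exact E_bot (i+1)

/-- `F` preserves the generating relation (up to `hsRel`). -/
lemma baseRel_F {p q : ℝ × ℝ} (h : baseRel p q) : hsRel (F p) (F q) := by
  rcases h with ⟨x, hx, rfl, rfl⟩ | ⟨y, hy, rfl, rfl⟩ | ⟨i, hi, y, hy, rfl, rfl⟩ |
    ⟨i, hi, x, hx, rfl, rfl⟩ | ⟨hp, hq⟩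
  · -- top edge: images are equal
    have : F (x, (1:ℝ)) = F (1 - x, (1:ℝ)) := by
      by_cases h1 : x ≤ 1/2 <;> by_cases h2 : (1:ℝ) - x ≤ 1/2
      · rw [F_left h1, F_left h2]
        have : x = 1/2 := by linarith
        subst this; norm_num
      · rw [F_left h1, F_right h2]; exact pmk (by ring) (by norm_num)
      · rw [F_right h1, F_left h2]; exact pmk (by ring) (by norm_num)
      · exfalso; push_neg at h1 h2; linarith
    rw [this]; exact Relation.EqvGen.refl _
  · -- right edge
    obtain ⟨hy0, hy1⟩ := hy
    rw [F_right (by norm_num), F_right (by norm_num)]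
    apply Relation.EqvGen.rel
    refine Or.inr (Or.inr (Or.inl ⟨1, le_refl 1, 1 - y/2, ⟨?_, ?_⟩, ?_, ?_⟩))
    · push_cast; norm_num; linarith
    · push_cast; norm_num; linarith
    · norm_num
    · have e : (2:ℝ)^(-((1:ℕ):ℤ)) = 1/2 := by push_cast; norm_num
      exact pmk (by norm_num) (by rw [e]; ring)
  · -- left edge
    obtain ⟨hy0, hy1⟩ := hy
    rw [F_left (by norm_num), F_left (by norm_num)]
    apply Relation.EqvGen.rel
    refine Or.inr (Or.inr (Or.inl ⟨i+1, by omega, y/2, ⟨?_, ?_⟩, ?_, ?_⟩))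
    · rw [tp_succ]; linarith
    · rw [tp_add1, tp_succ]; rw [tp_add1] at hy1; linarith
    · exact pmk (by norm_num) rfl
    · rw [tp_succ]; exact pmk (by norm_num) (by ring)
  · -- bottom edge
    obtain ⟨hx0, hx1⟩ := hx
    obtain ⟨j, rfl⟩ : ∃ j, i = j + 1 := ⟨i - 1, by omega⟩
    rcases j with _ | k
    · -- i = 1 : x ∈ [1/2, 1]
      have e1 : (2:ℝ)^(-((0+1:ℕ):ℤ)) = 1/2 := by push_cast; norm_num
      have e2 : (2:ℝ)^(-((0+1:ℕ):ℤ)+1) = 1 := by push_cast; norm_num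
      rw [e1] at hx0
      rw [e2] at hx1
      have e3 : 3 * (2:ℝ)^(-((0+1:ℕ):ℤ)) - x = 3/2 - x := by rw [e1]; ring
      rw [e3]
      by_cases h1 : x ≤ 1/2 <;> by_cases h2 : (3:ℝ)/2 - x ≤ 1/2
      · exfalso; linarith
      · -- x = 1/2
        have hx2 : x = 1/2 := le_antisymm h1 hx0
        subst hx2
        rw [F_left h1, F_right h2]
        have e4 : ((2:ℝ)*(1/2), (0:ℝ)/2) = ((1:ℝ), (0:ℝ)) := by norm_num
        have e5 : ((2:ℝ) - 2*(3/2 - 1/2), 1 - 0/2) = ((0:ℝ), (1:ℝ)) := by norm_num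
        rw [e4, e5]
        exact Relation.EqvGen.rel _ _ (Or.inr (Or.inr (Or.inr (Or.inr ⟨E_10, E_01⟩))))
      · -- x = 1
        have hx2 : x = 1 := le_antisymm hx1 (by linarith)
        subst hx2
        rw [F_right h1, F_left h2]
        have e4 : ((2:ℝ) - 2*1, 1 - 0/2) = ((0:ℝ), (1:ℝ)) := by norm_num
        have e5 : ((2:ℝ)*(3/2 - 1), (0:ℝ)/2) = ((1:ℝ), (0:ℝ)) := by norm_num
        rw [e4, e5]
        exact Relation.EqvGen.rel _ _ (Or.inr (Or.inr (Or.inr (Or.inr ⟨E_01, E_10⟩))))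
      · -- interior: fold of top edge
        rw [F_right h1, F_right h2]
        apply Relation.EqvGen.rel
        refine Or.inl ⟨2 - 2*x, ⟨by linarith, by linarith⟩, ?_, ?_⟩
        · exact pmk rfl (by norm_num)
        · exact pmk (by ring) (by norm_num)
    · -- i ≥ 2
      have hb : (2:ℝ)^(-((k+1:ℕ):ℤ)) ≤ 1/2 := tp_half (by omega)
      have hbpos : (0:ℝ) < (2:ℝ)^(-((k+1:ℕ):ℤ)) := tp_pos _
      have e : (2:ℝ)^(-((k+1+1:ℕ):ℤ)) = (2:ℝ)^(-((k+1:ℕ):ℤ))/2 := tp_succ (k+1)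
      rw [tp_add1, e] at hx1
      rw [e] at hx0
      have hxle : x ≤ 1/2 := by linarith
      have hx'le : 3 * (2:ℝ)^(-((k+1+1:ℕ):ℤ)) - x ≤ 1/2 := by rw [e]; linarith
      rw [F_left hxle, F_left hx'le]
      apply Relation.EqvGen.rel
      refine Or.inr (Or.inr (Or.inr (Or.inl ⟨k+1, by omega, 2*x, ⟨by linarith, ?_⟩, ?_, ?_⟩)))
      · rw [tp_add1]; linarith
      · exact pmk rfl (by norm_num)
      · rw [e]; exact pmk (by ring) (by norm_num)
  · -- endpoint set
    exact Relation.EqvGen.rel _ _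
      (Or.inr (Or.inr (Or.inr (Or.inr ⟨F_maps_E _ hp, F_maps_E _ hq⟩))))

/-- `Ginv` preserves the generating relation (up to `hsRel`). -/
lemma baseRel_G {p q : ℝ × ℝ} (h : baseRel p q) : hsRel (Ginv p) (Ginv q) := by
  rcases h with ⟨x, hx, rfl, rfl⟩ | ⟨y, hy, rfl, rfl⟩ | ⟨i, hi, y, hy, rfl, rfl⟩ |
    ⟨i, hi, x, hx, rfl, rfl⟩ | ⟨hp, hq⟩
  · -- top edge: folds to bottom edge identification with i = 1
    obtain ⟨hx0, hx1⟩ := hx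
    rw [G_high (by norm_num), G_high (by norm_num)]
    apply Relation.EqvGen.rel
    refine Or.inr (Or.inr (Or.inr (Or.inl ⟨1, le_refl 1, 1 - x/2, ⟨?_, ?_⟩, ?_, ?_⟩)))
    · push_cast; norm_num; linarith
    · push_cast; norm_num; linarith
    · norm_num
    · have e : (2:ℝ)^(-((1:ℕ):ℤ)) = 1/2 := by push_cast; norm_num
      exact pmk (by rw [e]; ring) (by norm_num)
  · -- right edge: images are equal
    have : Ginv ((1:ℝ), y) = Ginv ((1:ℝ), 1 - y) := by
      by_cases h1 : y ≤ 1/2 <;> by_cases h2 : (1:ℝ) - y ≤ 1/2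
      · rw [G_low h1, G_low h2]
        have : y = 1/2 := by linarith
        subst this; norm_num
      · rw [G_low h1, G_high h2]; exact pmk (by ring) (by ring)
      · rw [G_high h1, G_low h2]; exact pmk (by ring) (by ring)
      · exfalso; push_neg at h1 h2; linarith
    rw [this]; exact Relation.EqvGen.refl _
  · -- left edge
    obtain ⟨hy0, hy1⟩ := hy
    obtain ⟨j, rfl⟩ : ∃ j, i = j + 1 := ⟨i - 1, by omega⟩
    rcases j with _ | k
    · -- i = 1 : y ∈ [1/2, 1]
      have e1 : (2:ℝ)^(-((0+1:ℕ):ℤ)) = 1/2 := by push_cast; norm_num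
      have e2 : (2:ℝ)^(-((0+1:ℕ):ℤ)+1) = 1 := by push_cast; norm_num
      rw [e1] at hy0
      rw [e2] at hy1
      have e3 : 3 * (2:ℝ)^(-((0+1:ℕ):ℤ)) - y = 3/2 - y := by rw [e1]; ring
      rw [e3]
      by_cases h1 : y ≤ 1/2 <;> by_cases h2 : (3:ℝ)/2 - y ≤ 1/2
      · exfalso; linarith
      · have hy2 : y = 1/2 := le_antisymm h1 hy0
        subst hy2
        rw [G_low h1, G_high h2]
        have e4 : ((0:ℝ)/2, (2:ℝ)*(1/2)) = ((0:ℝ), (1:ℝ)) := by norm_num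
        have e5 : ((1:ℝ) - 0/2, 2 - 2*(3/2 - 1/2)) = ((1:ℝ), (0:ℝ)) := by norm_num
        rw [e4, e5]
        exact Relation.EqvGen.rel _ _ (Or.inr (Or.inr (Or.inr (Or.inr ⟨E_01, E_10⟩))))
      · have hy2 : y = 1 := le_antisymm hy1 (by linarith)
        subst hy2
        rw [G_high h1, G_low h2]
        have e4 : ((1:ℝ) - 0/2, 2 - 2*1) = ((1:ℝ), (0:ℝ)) := by norm_num
        have e5 : ((0:ℝ)/2, (2:ℝ)*(3/2 - 1)) = ((0:ℝ), (1:ℝ)) := by norm_num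
        rw [e4, e5]
        exact Relation.EqvGen.rel _ _ (Or.inr (Or.inr (Or.inr (Or.inr ⟨E_10, E_01⟩))))
      · -- interior: fold onto right edge
        rw [G_high h1, G_high h2]
        apply Relation.EqvGen.rel
        refine Or.inr (Or.inl ⟨2 - 2*y, ⟨by linarith, by linarith⟩, ?_, ?_⟩)
        · exact pmk (by norm_num) rfl
        · exact pmk (by norm_num) (by ring)
    · -- i ≥ 2
      have hb : (2:ℝ)^(-((k+1:ℕ):ℤ)) ≤ 1/2 := tp_half (by omega)
      have hbpos : (0:ℝ) < (2:ℝ)^(-((k+1:ℕ):ℤ)) := tp_pos _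
      have e : (2:ℝ)^(-((k+1+1:ℕ):ℤ)) = (2:ℝ)^(-((k+1:ℕ):ℤ))/2 := tp_succ (k+1)
      rw [tp_add1, e] at hy1
      rw [e] at hy0
      have hyle : y ≤ 1/2 := by linarith
      have hy'le : 3 * (2:ℝ)^(-((k+1+1:ℕ):ℤ)) - y ≤ 1/2 := by rw [e]; linarith
      rw [G_low hyle, G_low hy'le]
      apply Relation.EqvGen.rel
      refine Or.inr (Or.inr (Or.inl ⟨k+1, by omega, 2*y, ⟨by linarith, ?_⟩, ?_, ?_⟩))
      · rw [tp_add1]; linarith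
      · exact pmk (by norm_num) rfl
      · rw [e]; exact pmk (by norm_num) (by ring)
  · -- bottom edge
    obtain ⟨hx0, hx1⟩ := hx
    have hbpos : (0:ℝ) < (2:ℝ)^(-(i:ℤ)) := tp_pos _
    rw [G_low (by norm_num), G_low (by norm_num)]
    apply Relation.EqvGen.rel
    refine Or.inr (Or.inr (Or.inr (Or.inl ⟨i+1, by omega, x/2, ⟨?_, ?_⟩, ?_, ?_⟩)))
    · rw [tp_succ]; linarith
    · rw [tp_add1, tp_succ]; rw [tp_add1] at hx1; linarith
    · exact pmk rfl (by norm_num)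
    · rw [tp_succ]; exact pmk (by ring) (by norm_num)
  · exact Relation.EqvGen.rel _ _
      (Or.inr (Or.inr (Or.inr (Or.inr ⟨G_maps_E _ hp, G_maps_E _ hq⟩))))

lemma hsRel_F {p q : ℝ × ℝ} (h : hsRel p q) : hsRel (F p) (F q) := by
  induction h with
  | rel a b hab => exact baseRel_F hab
  | refl a => exact Relation.EqvGen.refl _
  | symm a b _ ih => exact Relation.EqvGen.symm _ _ ih
  | trans a b c _ _ ih1 ih2 => exact Relation.EqvGen.trans _ _ _ ih1 ih2

lemma hsRel_G {p q : ℝ × ℝ} (h : hsRel p q) : hsRel (Ginv p) (Ginv q) := by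
  induction h with
  | rel a b hab => exact baseRel_G hab
  | refl a => exact Relation.EqvGen.refl _
  | symm a b _ ih => exact Relation.EqvGen.symm _ _ ih
  | trans a b c _ _ ih1 ih2 => exact Relation.EqvGen.trans _ _ _ ih1 ih2

lemma F_mem_Sq {p : ℝ × ℝ} (hp : p ∈ Sq) : F p ∈ Sq := by
  obtain ⟨⟨hx0, hx1⟩, hy0, hy1⟩ := hp
  by_cases h : p.1 ≤ 1/2
  · rw [show p = (p.1, p.2) from rfl, F_left h]
    exact ⟨⟨by linarith, by linarith⟩, by linarith, by linarith⟩
  · rw [show p = (p.1, p.2) from rfl, F_right h]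
    push_neg at h
    exact ⟨⟨by linarith, by linarith⟩, by linarith, by linarith⟩

lemma G_mem_Sq {p : ℝ × ℝ} (hp : p ∈ Sq) : Ginv p ∈ Sq := by
  obtain ⟨⟨hx0, hx1⟩, hy0, hy1⟩ := hp
  by_cases h : p.2 ≤ 1/2
  · rw [show p = (p.1, p.2) from rfl, G_low h]
    exact ⟨⟨by linarith, by linarith⟩, by linarith, by linarith⟩
  · rw [show p = (p.1, p.2) from rfl, G_high h]
    push_neg at h
    exact ⟨⟨by linarith, by linarith⟩, by linarith, by linarith⟩

/-- `Ginv ∘ F` is the identity up to the identifications. -/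
lemma GF_rel {p : ℝ × ℝ} (hp : p ∈ Sq) : hsRel (Ginv (F p)) p := by
  obtain ⟨⟨hx0, hx1⟩, hy0, hy1⟩ := hp
  obtain ⟨x, y⟩ := p
  simp only at hx0 hx1 hy0 hy1
  by_cases h : x ≤ 1/2
  · rw [F_left h, G_low (by linarith)]
    have : ((2*x/2 : ℝ), (2*(y/2) : ℝ)) = (x, y) := pmk (by ring) (by ring)
    rw [this]; exact Relation.EqvGen.refl _
  · rw [F_right h]
    by_cases h2 : (1:ℝ) - y/2 ≤ 1/2
    · -- y = 1
      have hy2 : y = 1 := le_antisymm hy1 (by linarith)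
      subst hy2
      rw [G_low h2]
      have : (((2-2*x)/2 : ℝ), (2*(1-1/2:ℝ) : ℝ)) = ((1 - x : ℝ), (1:ℝ)) := pmk (by ring) (by norm_num)
      rw [this]
      apply Relation.EqvGen.rel
      refine Or.inl ⟨1 - x, ⟨by linarith, by linarith⟩, rfl, ?_⟩
      exact pmk (by ring) rfl
    · rw [G_high h2]
      have : ((1 - (2-2*x)/2 : ℝ), (2 - 2*(1-y/2) : ℝ)) = (x, y) := by
        exact pmk (by ring) (by ring)
      rw [this]; exact Relation.EqvGen.refl _

/-- `F ∘ Ginv` is the identity up to the identifications. -/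
lemma FG_rel {p : ℝ × ℝ} (hp : p ∈ Sq) : hsRel (F (Ginv p)) p := by
  obtain ⟨⟨hx0, hx1⟩, hy0, hy1⟩ := hp
  obtain ⟨u, v⟩ := p
  simp only at hx0 hx1 hy0 hy1
  by_cases h : v ≤ 1/2
  · rw [G_low h, F_left (by linarith)]
    have : ((2*(u/2) : ℝ), (2*v/2 : ℝ)) = (u, v) := pmk (by ring) (by ring)
    rw [this]; exact Relation.EqvGen.refl _
  · rw [G_high h]
    by_cases h2 : (1:ℝ) - u/2 ≤ 1/2
    · -- u = 1
      have hu2 : u = 1 := le_antisymm hx1 (by linarith)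
      subst hu2
      rw [F_left h2]
      have : ((2*(1-1/2:ℝ) : ℝ), ((2-2*v)/2 : ℝ)) = ((1:ℝ), (1 - v : ℝ)) := pmk (by norm_num) (by ring)
      rw [this]
      apply Relation.EqvGen.symm
      apply Relation.EqvGen.rel
      refine Or.inr (Or.inl ⟨v, ⟨by linarith, by linarith⟩, rfl, rfl⟩)
    · rw [F_right h2]
      have : ((2 - 2*(1-u/2) : ℝ), (1 - (2-2*v)/2 : ℝ)) = (u, v) := by
        exact pmk (by ring) (by ring)
      rw [this]; exact Relation.EqvGen.refl _

lemma cont_hsPi : Continuous hsPi := continuous_quot_mk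

/-- The lift of `F` to the quotient. -/
def phiT : HS → HS :=
  Quotient.lift (fun p : ↥Sq => hsPi ⟨F p.val, F_mem_Sq p.prop⟩)
    (fun _ _ hab => Quotient.sound (hsRel_F hab))

/-- The lift of `Ginv` to the quotient. -/
def psiT : HS → HS :=
  Quotient.lift (fun p : ↥Sq => hsPi ⟨Ginv p.val, G_mem_Sq p.prop⟩)
    (fun _ _ hab => Quotient.sound (hsRel_G hab))

lemma cont_phiT_aux : Continuous (fun p : ↥Sq => hsPi ⟨F p.val, F_mem_Sq p.prop⟩) := by
  have m1 : ∀ p : ↥Sq, ((min (2*p.val.1) 1, p.val.2/2) : ℝ×ℝ) ∈ Sq := by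
    intro p
    obtain ⟨⟨hx0, hx1⟩, hy0, hy1⟩ := p.prop
    exact ⟨⟨le_min (by linarith) zero_le_one, min_le_right _ _⟩, by linarith, by linarith⟩
  have m2 : ∀ p : ↥Sq, ((min (2 - 2*p.val.1) 1, 1 - p.val.2/2) : ℝ×ℝ) ∈ Sq := by
    intro p
    obtain ⟨⟨hx0, hx1⟩, hy0, hy1⟩ := p.prop
    exact ⟨⟨le_min (by linarith) zero_le_one, min_le_right _ _⟩, by linarith, by linarith⟩
  have c1 : Continuous (fun p : ↥Sq => hsPi ⟨(min (2*p.val.1) 1, p.val.2/2), m1 p⟩) := by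
    apply cont_hsPi.comp
    apply Continuous.subtype_mk
    fun_prop
  have c2 : Continuous (fun p : ↥Sq =>
      hsPi ⟨(min (2 - 2*p.val.1) 1, 1 - p.val.2/2), m2 p⟩) := by
    apply cont_hsPi.comp
    apply Continuous.subtype_mk
    fun_prop
  have key : (fun p : ↥Sq => hsPi ⟨F p.val, F_mem_Sq p.prop⟩)
      = fun p : ↥Sq => if p.val.1 ≤ 1/2
          then hsPi ⟨(min (2*p.val.1) 1, p.val.2/2), m1 p⟩
          else hsPi ⟨(min (2 - 2*p.val.1) 1, 1 - p.val.2/2), m2 p⟩ := by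
    funext p
    obtain ⟨⟨hx0, hx1⟩, hy0, hy1⟩ := p.prop
    by_cases h : p.val.1 ≤ 1/2
    · rw [if_pos h]
      apply congrArg hsPi
      apply Subtype.ext
      show F (p.val.1, p.val.2) = _
      exact (F_left h).trans (pmk ((min_eq_left (by linarith : 2*p.val.1 ≤ 1)).symm) rfl)
    · rw [if_neg h]
      apply congrArg hsPi
      apply Subtype.ext
      show F (p.val.1, p.val.2) = _
      push_neg at h
      exact (F_right (not_le.mpr h)).trans
        (pmk ((min_eq_left (by linarith : 2 - 2*p.val.1 ≤ 1)).symm) rfl)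
  rw [key]
  refine Continuous.if_le c1 c2 (by fun_prop) continuous_const ?_
  intro p hp
  obtain ⟨⟨hx0, hx1⟩, hy0, hy1⟩ := p.prop
  apply Quotient.sound
  show hsRel (min (2*p.val.1) 1, p.val.2/2) (min (2 - 2*p.val.1) 1, 1 - p.val.2/2)
  have e1 : min (2*p.val.1) 1 = 1 := by rw [hp]; norm_num
  have e2 : min (2 - 2*p.val.1) 1 = 1 := by rw [hp]; norm_num
  rw [e1, e2]
  exact Relation.EqvGen.rel _ _
    (Or.inr (Or.inl ⟨p.val.2/2, ⟨by linarith, by linarith⟩, rfl, rfl⟩))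

lemma cont_psiT_aux : Continuous (fun p : ↥Sq => hsPi ⟨Ginv p.val, G_mem_Sq p.prop⟩) := by
  have m1 : ∀ p : ↥Sq, ((p.val.1/2, min (2*p.val.2) 1) : ℝ×ℝ) ∈ Sq := by
    intro p
    obtain ⟨⟨hx0, hx1⟩, hy0, hy1⟩ := p.prop
    exact ⟨⟨by linarith, by linarith⟩, le_min (by linarith) zero_le_one, min_le_right _ _⟩
  have m2 : ∀ p : ↥Sq, ((1 - p.val.1/2, min (2 - 2*p.val.2) 1) : ℝ×ℝ) ∈ Sq := by
    intro p
    obtain ⟨⟨hx0, hx1⟩, hy0, hy1⟩ := p.prop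
    exact ⟨⟨by linarith, by linarith⟩, le_min (by linarith) zero_le_one, min_le_right _ _⟩
  have c1 : Continuous (fun p : ↥Sq => hsPi ⟨(p.val.1/2, min (2*p.val.2) 1), m1 p⟩) := by
    apply cont_hsPi.comp
    apply Continuous.subtype_mk
    fun_prop
  have c2 : Continuous (fun p : ↥Sq =>
      hsPi ⟨(1 - p.val.1/2, min (2 - 2*p.val.2) 1), m2 p⟩) := by
    apply cont_hsPi.comp
    apply Continuous.subtype_mk
    fun_prop
  have key : (fun p : ↥Sq => hsPi ⟨Ginv p.val, G_mem_Sq p.prop⟩)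
      = fun p : ↥Sq => if p.val.2 ≤ 1/2
          then hsPi ⟨(p.val.1/2, min (2*p.val.2) 1), m1 p⟩
          else hsPi ⟨(1 - p.val.1/2, min (2 - 2*p.val.2) 1), m2 p⟩ := by
    funext p
    obtain ⟨⟨hx0, hx1⟩, hy0, hy1⟩ := p.prop
    by_cases h : p.val.2 ≤ 1/2
    · rw [if_pos h]
      apply congrArg hsPi
      apply Subtype.ext
      show Ginv (p.val.1, p.val.2) = _
      exact (G_low h).trans (pmk rfl ((min_eq_left (by linarith : 2*p.val.2 ≤ 1)).symm))
    · rw [if_neg h]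
      apply congrArg hsPi
      apply Subtype.ext
      show Ginv (p.val.1, p.val.2) = _
      push_neg at h
      exact (G_high (not_le.mpr h)).trans
        (pmk rfl ((min_eq_left (by linarith : 2 - 2*p.val.2 ≤ 1)).symm))
  rw [key]
  refine Continuous.if_le c1 c2 (by fun_prop) continuous_const ?_
  intro p hp
  obtain ⟨⟨hx0, hx1⟩, hy0, hy1⟩ := p.prop
  apply Quotient.sound
  show hsRel (p.val.1/2, min (2*p.val.2) 1) (1 - p.val.1/2, min (2 - 2*p.val.2) 1)
  have e1 : min (2*p.val.2) 1 = 1 := by rw [hp]; norm_num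
  have e2 : min (2 - 2*p.val.2) 1 = 1 := by rw [hp]; norm_num
  rw [e1, e2]
  exact Relation.EqvGen.rel _ _
    (Or.inl ⟨p.val.1/2, ⟨by linarith, by linarith⟩, rfl, rfl⟩)

/-- The tight horseshoe map as a homeomorphism of `HS`. -/
def horseHomeo : HS ≃ₜ HS where
  toFun := phiT
  invFun := psiT
  left_inv := by
    intro x
    induction x using Quotient.ind with
    | _ p =>
      have e : psiT (phiT (Quotient.mk hsSetoid p))
          = Quotient.mk hsSetoid (⟨Ginv (F p.val), G_mem_Sq (F_mem_Sq p.prop)⟩ : ↥Sq) := rfl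
      rw [e]
      exact Quotient.sound (GF_rel p.prop)
  right_inv := by
    intro x
    induction x using Quotient.ind with
    | _ p =>
      have e : phiT (psiT (Quotient.mk hsSetoid p))
          = Quotient.mk hsSetoid (⟨F (Ginv p.val), F_mem_Sq (G_mem_Sq p.prop)⟩ : ↥Sq) := rfl
      rw [e]
      exact Quotient.sound (FG_rel p.prop)
  continuous_toFun := Continuous.quotient_lift cont_phiT_aux _
  continuous_invFun := Continuous.quotient_lift cont_psiT_aux _

end AuxHorse

/-- The induced map `φ₀ : S → S` (the tight horseshoe map, given by `φ₀ ∘ π = π ∘ F`)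
is a homeomorphism of `S`: a continuous bijection of `S` with continuous inverse. -/
theorem phi0_homeomorphism (φ : HS → HS)
    (hφ : ∀ (p : ℝ × ℝ) (hp : p ∈ Sq) (hFp : F p ∈ Sq),
      φ (hsPi ⟨p, hp⟩) = hsPi ⟨F p, hFp⟩) :
    ∃ h : HS ≃ₜ HS, ∀ x : HS, h x = φ x := by
  refine ⟨horseHomeo, ?_⟩
  intro x
  induction x using Quotient.ind with
  | _ p => exact (hφ p.val p.prop (F_mem_Sq p.prop)).symm
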